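/- For every k ≥ 1: if k is odd, then every Σ¹ₖ-KROM^r formula is equivalent on all finite structures to a Σ¹ₖ₊₁-KROM^r formula and vice versa; and if k is even, then every Π¹ₖ-KROM^r formula is equivalent on all finite structures to a Π¹ₖ₊₁-KROM^r formula and vice versa. -/

import Mathlib

/-- A finite relational vocabulary: a type of relation symbols with arities. -/
structure Vocab where
  Rel : Type
  arity : Rel → ℕ

/-- A structure over a relational vocabulary. -/
structure Struct (σ : Vocab) where
  Dom : Type
  rel : (r : σ.Rel) → (Fin (σ.arity r) → Dom) → Prop

namespace SOKrom

variable {σ : Vocab}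

/-- A valuation of `m` second-order relation variables with arities `ar` over a domain `D`. -/
abbrev Val (m : ℕ) (ar : Fin m → ℕ) (D : Type) := (i : Fin m) → Set (Fin (ar i) → D)

/-- First-order literals over `σ` (atomic or negated atomic, including equality). -/
inductive FOLit (σ : Vocab) : Type
  | pos (r : σ.Rel) (args : Fin (σ.arity r) → ℕ)
  | neg (r : σ.Rel) (args : Fin (σ.arity r) → ℕ)
  | eq (a b : ℕ)
  | ne (a b : ℕ)

def FOLit.Sat (A : Struct σ) (s : ℕ → A.Dom) : FOLit σ → Prop
  | .pos r args => A.rel r (fun i => s (args i))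
  | .neg r args => ¬ A.rel r (fun i => s (args i))
  | .eq a b => s a = s b
  | .ne a b => s a ≠ s b

/-- Second-order literals w.r.t. relation variables `R₀,…,R_{m-1}` of arities `ar`:
`Rᵢ z̄`, `¬ Rᵢ z̄`, `∃z̄ Rᵢ z̄` (revised Krom only) or `⊥`. -/
inductive SOLit (m : ℕ) (ar : Fin m → ℕ) : Type
  | pos (i : Fin m) (args : Fin (ar i) → ℕ)
  | neg (i : Fin m) (args : Fin (ar i) → ℕ)
  | ex (i : Fin m)
  | bot

/-- A second-order literal is a (non-revised) Krom literal iff it is not of the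
form `∃z̄ Rᵢ z̄`. -/
def SOLit.isKrom {m : ℕ} {ar : Fin m → ℕ} : SOLit m ar → Prop
  | .ex _ => False
  | _ => True

def SOLit.Sat {m : ℕ} {ar : Fin m → ℕ} (A : Struct σ) (V : Val m ar A.Dom)
    (s : ℕ → A.Dom) : SOLit m ar → Prop
  | .pos i args => (fun j => s (args j)) ∈ V i
  | .neg i args => (fun j => s (args j)) ∉ V i
  | .ex i => ∃ t, t ∈ V i
  | .bot => False

/-- A (revised) Krom clause: finitely many first-order literals and two
second-order literals. -/
structure Clause (σ : Vocab) (m : ℕ) (ar : Fin m → ℕ) where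
  fo : List (FOLit σ)
  h1 : SOLit m ar
  h2 : SOLit m ar

def Clause.Sat (A : Struct σ) {m : ℕ} {ar : Fin m → ℕ} (V : Val m ar A.Dom)
    (s : ℕ → A.Dom) (C : Clause σ m ar) : Prop :=
  (∃ l ∈ C.fo, l.Sat A s) ∨ C.h1.Sat A V s ∨ C.h2.Sat A V s

/-- An SO-KROM^r formula: a second-order quantifier prefix
`Q₀R₀ ⋯ Q_{m-1}R_{m-1}` (`qt i = true` meaning `∃`, `false` meaning `∀`)
followed by `∀x̄ (C₁ ∧ ⋯ ∧ Cₙ)` where `x̄` are the first-order variables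
with index `< nvars` and the `Cⱼ` are revised Krom clauses. -/
structure KromR (σ : Vocab) where
  m : ℕ
  ar : Fin m → ℕ
  qt : Fin m → Bool
  nvars : ℕ
  clauses : List (Clause σ m ar)

/-- The matrix `∀x̄ (C₁ ∧ ⋯ ∧ Cₙ)` evaluated in environment `e`. -/
def KromR.Matrix (Φ : KromR σ) (A : Struct σ) (V : Val Φ.m Φ.ar A.Dom)
    (e : ℕ → A.Dom) : Prop :=
  ∀ s : ℕ → A.Dom, (∀ j, Φ.nvars ≤ j → s j = e j) → ∀ C ∈ Φ.clauses, C.Sat A V s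

def KromR.satAux (Φ : KromR σ) (A : Struct σ) (e : ℕ → A.Dom)
    (V : Val Φ.m Φ.ar A.Dom) (j : ℕ) : Prop :=
  if h : j < Φ.m then
    if Φ.qt ⟨j, h⟩ then
      ∃ S, Φ.satAux A e (Function.update V ⟨j, h⟩ S) (j + 1)
    else
      ∀ S, Φ.satAux A e (Function.update V ⟨j, h⟩ S) (j + 1)
  else Φ.Matrix A V e
termination_by Φ.m - j

/-- Satisfaction of an SO-KROM^r formula in a structure `A` under a first-order
environment `e`. -/
def KromR.Sat (Φ : KromR σ) (A : Struct σ) (e : ℕ → A.Dom) : Prop :=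
  Φ.satAux A e (fun _ => ∅) 0

/-- `Φ` is a (non-revised) SO-KROM formula iff no clause uses a literal
`∃z̄ Rᵢ z̄`. -/
def KromR.isKrom (Φ : KromR σ) : Prop :=
  ∀ C ∈ Φ.clauses, C.h1.isKrom ∧ C.h2.isKrom

/-- Number of alternations in a quantifier prefix. -/
def altCount : List Bool → ℕ
  | [] => 0
  | [_] => 0
  | a :: b :: l => (if a = b then 0 else 1) + altCount (b :: l)

def KromR.prefixList (Φ : KromR σ) : List Bool := List.ofFn Φ.qt

/-- `Φ` is a `Σ¹ₖ`(-KROM^r) formula: its second-order prefix starts with an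
existential quantifier and alternates `k - 1` times. -/
def KromR.IsSigma (k : ℕ) (Φ : KromR σ) : Prop :=
  Φ.prefixList.head? = some true ∧ altCount Φ.prefixList = k - 1

/-- `Φ` is a `Π¹ₖ`(-KROM^r) formula: its second-order prefix starts with a
universal quantifier and alternates `k - 1` times. -/
def KromR.IsPi (k : ℕ) (Φ : KromR σ) : Prop :=
  Φ.prefixList.head? = some false ∧ altCount Φ.prefixList = k - 1

end SOKrom

namespace SOKrom

variable {σ : Vocab}

/-- First-order formulas over `σ`, possibly with free occurrences of `m`
second-order relation variables of arities `ar`. -/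
inductive FO (σ : Vocab) (m : ℕ) (ar : Fin m → ℕ) : Type
  | rel (r : σ.Rel) (args : Fin (σ.arity r) → ℕ)
  | svar (i : Fin m) (args : Fin (ar i) → ℕ)
  | equal (a b : ℕ)
  | not (φ : FO σ m ar)
  | and (φ ψ : FO σ m ar)
  | or (φ ψ : FO σ m ar)
  | all (v : ℕ) (φ : FO σ m ar)
  | ex (v : ℕ) (φ : FO σ m ar)

def FO.Sat (A : Struct σ) {m : ℕ} {ar : Fin m → ℕ} (V : Val m ar A.Dom) :
    FO σ m ar → (ℕ → A.Dom) → Prop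
  | .rel r args, e => A.rel r (fun i => e (args i))
  | .svar i args, e => (fun j => e (args j)) ∈ V i
  | .equal a b, e => e a = e b
  | .not φ, e => ¬ φ.Sat A V e
  | .and φ ψ, e => φ.Sat A V e ∧ ψ.Sat A V e
  | .or φ ψ, e => φ.Sat A V e ∨ ψ.Sat A V e
  | .all v φ, e => ∀ a, φ.Sat A V (Function.update e v a)
  | .ex v φ, e => ∃ a, φ.Sat A V (Function.update e v a)

/-- A second-order formula in prenex form: a prefix of second-order
quantifiers (`qt i = true` meaning `∃`, `false` meaning `∀`) followed by a
first-order formula. -/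
structure SOForm (σ : Vocab) where
  m : ℕ
  ar : Fin m → ℕ
  qt : Fin m → Bool
  matrix : FO σ m ar

def SOForm.satAux (Φ : SOForm σ) (A : Struct σ) (e : ℕ → A.Dom)
    (V : Val Φ.m Φ.ar A.Dom) (j : ℕ) : Prop :=
  if h : j < Φ.m then
    if Φ.qt ⟨j, h⟩ then
      ∃ S, Φ.satAux A e (Function.update V ⟨j, h⟩ S) (j + 1)
    else
      ∀ S, Φ.satAux A e (Function.update V ⟨j, h⟩ S) (j + 1)
  else Φ.matrix.Sat A V e
termination_by Φ.m - j

def SOForm.Sat (Φ : SOForm σ) (A : Struct σ) (e : ℕ → A.Dom) : Prop :=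
  Φ.satAux A e (fun _ => ∅) 0

/-- `Φ` is a `Σ¹ₖ` second-order formula. -/
def SOForm.IsSigma (k : ℕ) (Φ : SOForm σ) : Prop :=
  (List.ofFn Φ.qt).head? = some true ∧ altCount (List.ofFn Φ.qt) = k - 1

/-- `Φ` is a `Π¹ₖ` second-order formula. -/
def SOForm.IsPi (k : ℕ) (Φ : SOForm σ) : Prop :=
  (List.ofFn Φ.qt).head? = some false ∧ altCount (List.ofFn Φ.qt) = k - 1

/-- `Φ` is a `Π¹₁` formula: a block of universal second-order quantifiers
followed by a first-order formula. -/
def SOForm.IsPi11 (Φ : SOForm σ) : Prop := ∀ i, Φ.qt i = false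

/-! ### Ordered structures -/

/-- The extra symbols of ordered structures: a linear order `≤`, the successor
relation, and the least and greatest elements (as unary predicates). -/
inductive OrdSym : Type
  | le | succ | min | max

def ordArity : OrdSym → ℕ
  | .le => 2
  | .succ => 2
  | .min => 1
  | .max => 1

/-- The vocabulary `σ` enlarged with the order symbols. -/
def withOrder (σ : Vocab) : Vocab where
  Rel := σ.Rel ⊕ OrdSym
  arity := Sum.elim σ.arity ordArity

/-- `A` is an ordered structure: `≤` is interpreted as a linear order of the
domain, `SUCC` as the associated successor relation, and `min`/`max` hold
exactly of the least/greatest elements. -/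
def IsOrdered (A : Struct (withOrder σ)) : Prop :=
  ∃ _ : LinearOrder A.Dom,
    (∀ a b : A.Dom, A.rel (Sum.inr OrdSym.le) ![a, b] ↔ a ≤ b) ∧
    (∀ a b : A.Dom, A.rel (Sum.inr OrdSym.succ) ![a, b] ↔
      (a < b ∧ ∀ c, ¬(a < c ∧ c < b))) ∧
    (∀ a : A.Dom, A.rel (Sum.inr OrdSym.min) ![a] ↔ ∀ b, a ≤ b) ∧
    (∀ a : A.Dom, A.rel (Sum.inr OrdSym.max) ![a] ↔ ∀ b, b ≤ a)

end SOKrom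

namespace SOKrom

variable {σ : Vocab}

/-! ### Extended Krom logic (SO-EKROM) -/

/-- Literals allowed in the first-order part of an extended Krom clause:
atomic or negated atomic formulas whose relation symbol is in
`τ ∪ {X₁,…,Xₖ}` (including equality). -/
inductive ELit (σ : Vocab) (m : ℕ) (ar : Fin m → ℕ) : Type
  | pos (r : σ.Rel) (args : Fin (σ.arity r) → ℕ)
  | neg (r : σ.Rel) (args : Fin (σ.arity r) → ℕ)
  | vpos (i : Fin m) (args : Fin (ar i) → ℕ)
  | vneg (i : Fin m) (args : Fin (ar i) → ℕ)
  | eq (a b : ℕ)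
  | ne (a b : ℕ)

def ELit.Sat (A : Struct σ) {m : ℕ} {ar : Fin m → ℕ} (V : Val m ar A.Dom)
    (s : ℕ → A.Dom) : ELit σ m ar → Prop
  | .pos r args => A.rel r (fun i => s (args i))
  | .neg r args => ¬ A.rel r (fun i => s (args i))
  | .vpos i args => (fun j => s (args j)) ∈ V i
  | .vneg i args => (fun j => s (args j)) ∉ V i
  | .eq a b => s a = s b
  | .ne a b => s a ≠ s b

/-- A positive or negated atomic formula `Yᵢ z̄` / `¬ Yᵢ z̄` with a
second-order relation variable. -/
structure HLit (m : ℕ) (ar : Fin m → ℕ) where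
  sign : Bool
  i : Fin m
  args : Fin (ar i) → ℕ

def HLit.Sat {m : ℕ} {ar : Fin m → ℕ} {D : Type} (V : Val m ar D)
    (s : ℕ → D) (H : HLit m ar) : Prop :=
  if H.sign then (fun j => s (H.args j)) ∈ V H.i
  else (fun j => s (H.args j)) ∉ V H.i

/-- An extended Krom clause `α₁ ∨ ⋯ ∨ α_l ∨ H₁ ∨ H₂`. -/
structure EClause (σ : Vocab) (m : ℕ) (ar : Fin m → ℕ) where
  fo : List (ELit σ m ar)
  h1 : HLit m ar
  h2 : HLit m ar

def EClause.Sat (A : Struct σ) {m : ℕ} {ar : Fin m → ℕ} (V : Val m ar A.Dom)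
    (s : ℕ → A.Dom) (C : EClause σ m ar) : Prop :=
  (∃ l ∈ C.fo, l.Sat A V s) ∨ C.h1.Sat V s ∨ C.h2.Sat V s

/-- An SO-EKROM formula `∀X₁∃Y₁⋯∀Xₖ∃Yₖ ∀x̄(C₁ ∧ ⋯ ∧ Cₙ)`: the second-order
prefix mixes universally quantified relation variables (the `X`'s, `qt i =
false`) and existentially quantified ones (the `Y`'s, `qt i = true`); the
well-formedness condition `wf` requires that in every clause the literals of
the first-order part only use `τ` and the `X`'s, while the two distinguished
literals `H₁, H₂` use `Y`'s. -/
structure EKrom (σ : Vocab) where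
  m : ℕ
  ar : Fin m → ℕ
  qt : Fin m → Bool
  nvars : ℕ
  clauses : List (EClause σ m ar)
  wf : ∀ C ∈ clauses,
    (∀ (i : Fin m) (args : Fin (ar i) → ℕ),
        (ELit.vpos i args ∈ C.fo ∨ ELit.vneg i args ∈ C.fo) → qt i = false) ∧
    qt C.h1.i = true ∧ qt C.h2.i = true

def EKrom.Matrix (Φ : EKrom σ) (A : Struct σ) (V : Val Φ.m Φ.ar A.Dom)
    (e : ℕ → A.Dom) : Prop :=
  ∀ s : ℕ → A.Dom, (∀ j, Φ.nvars ≤ j → s j = e j) → ∀ C ∈ Φ.clauses, C.Sat A V s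

def EKrom.satAux (Φ : EKrom σ) (A : Struct σ) (e : ℕ → A.Dom)
    (V : Val Φ.m Φ.ar A.Dom) (j : ℕ) : Prop :=
  if h : j < Φ.m then
    if Φ.qt ⟨j, h⟩ then
      ∃ S, Φ.satAux A e (Function.update V ⟨j, h⟩ S) (j + 1)
    else
      ∀ S, Φ.satAux A e (Function.update V ⟨j, h⟩ S) (j + 1)
  else Φ.Matrix A V e
termination_by Φ.m - j

def EKrom.Sat (Φ : EKrom σ) (A : Struct σ) (e : ℕ → A.Dom) : Prop :=
  Φ.satAux A e (fun _ => ∅) 0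

/-- `Φ` is a `Π¹₂`-EKROM formula: all universal second-order quantifiers
precede all existential ones, i.e. the prefix has the form `∀X̄∃Ȳ`. -/
def EKrom.IsPi2 (Φ : EKrom σ) : Prop :=
  ∀ i j : Fin Φ.m, i ≤ j → Φ.qt i = true → Φ.qt j = true

/-- The substructure of `A` induced by a subset `D` of its domain. -/
def Substruct (A : Struct σ) (D : Set A.Dom) : Struct σ where
  Dom := D
  rel := fun r v => A.rel r (fun i => (v i : A.Dom))

end SOKrom

namespace SOKrom

variable {σ : Vocab}

/-! ### Quantified Boolean formulas in DNF and their encoding as structures -/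

/-- A closed quantified Boolean formula with `k` quantifier blocks and matrix
in disjunctive normal form: `nv` propositional variables, `blk x` being the
block in which variable `x` is quantified, and the matrix a disjunction of
clauses, each clause a conjunction of literals `(sign, variable)` (with
`sign = true` for a positive literal). -/
structure QDNF (k : ℕ) where
  nv : ℕ
  blk : Fin nv → Fin k
  clauses : List (List (Bool × Fin nv))

def QDNF.evalMatrix {k : ℕ} (ψ : QDNF k) (v : Fin ψ.nv → Bool) : Prop :=
  ∃ C ∈ ψ.clauses, ∀ l ∈ C, v l.2 = l.1

/-- Truth of the quantified Boolean formula, quantifying the blocks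
`h, h+1, …, k-1` in order; `sigma = true` means the prefix starts (at block 0)
with `∃`, and quantifiers alternate between consecutive blocks. -/
def QDNF.satBlk {k : ℕ} (ψ : QDNF k) (sigma : Bool) (v : Fin ψ.nv → Bool)
    (h : ℕ) : Prop :=
  if hh : h < k then
    if (if h % 2 = 0 then sigma else !sigma) then
      ∃ u : Fin ψ.nv → Bool,
        ψ.satBlk sigma (fun x => if ψ.blk x = ⟨h, hh⟩ then u x else v x) (h + 1)
    else
      ∀ u : Fin ψ.nv → Bool,
        ψ.satBlk sigma (fun x => if ψ.blk x = ⟨h, hh⟩ then u x else v x) (h + 1)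
  else ψ.evalMatrix v
termination_by k - h

/-- Truth of the closed QBF `ψ`, as a `Σₖ` sentence (`sigma = true`) or a `Πₖ`
sentence (`sigma = false`). -/
def QDNF.IsTrue {k : ℕ} (ψ : QDNF k) (sigma : Bool) : Prop :=
  ψ.satBlk sigma (fun _ => false) 0

/-- The vocabulary `{Clause, Var₁, …, Varₖ, Pos, Neg}`: `Sum.inl 0` is the
unary symbol `Clause`, `Sum.inl ⟨h+1,_⟩` is the unary symbol `Var_{h+1}`,
`Sum.inr true` is the binary symbol `Pos` and `Sum.inr false` is `Neg`. -/
def qbfVocab (k : ℕ) : Vocab where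
  Rel := Fin (k + 1) ⊕ Bool
  arity := Sum.elim (fun _ => 1) (fun _ => 2)

/-- The encoding of a QBF in DNF as a finite structure over
`{Clause, Var₁, …, Varₖ, Pos, Neg}`. -/
def QDNF.encode {k : ℕ} (ψ : QDNF k) : Struct (qbfVocab k) where
  Dom := Fin ψ.clauses.length ⊕ Fin ψ.nv
  rel := fun r =>
    match r with
    | Sum.inl c => fun v : Fin 1 → (Fin ψ.clauses.length ⊕ Fin ψ.nv) =>
        if c.val = 0 then ∃ i, v 0 = Sum.inl i
        else ∃ x, v 0 = Sum.inr x ∧ (ψ.blk x).val + 1 = c.val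
    | Sum.inr b => fun v : Fin 2 → (Fin ψ.clauses.length ⊕ Fin ψ.nv) =>
        ∃ (i : Fin ψ.clauses.length) (x : Fin ψ.nv),
          v 0 = Sum.inl i ∧ v 1 = Sum.inr x ∧ (b, x) ∈ ψ.clauses.get i

/-! ### The target normal form `∃Y ∀x̄(∃ȳ Y z̄ȳ ∧ C₁ ∧ ⋯ ∧ Cₘ)` -/

/-- A formula of the form `∃Y ∀x̄(∃ȳ Y z̄ȳ ∧ C₁ ∧ ⋯ ∧ Cₘ)`, where `Y` is a
single second-order variable of arity `a`, the variables `x̄` are those of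
index `< nvars`, `z̄` is a tuple of `p` variables from `x̄`, `ȳ` consists of
the remaining `a - p` argument positions of `Y`, and each `Cᵢ` is a
disjunction of atomic or negated atomic formulas over `σ ∪ {Y}`. -/
structure SkolemForm (σ : Vocab) where
  nvars : ℕ
  a : ℕ
  p : ℕ
  hp : p ≤ a
  zs : Fin p → ℕ
  hz : ∀ i, zs i < nvars
  clauses : List (List (ELit σ 1 (fun _ => a)))

def SkolemForm.Sat (F : SkolemForm σ) (A : Struct σ) (e : ℕ → A.Dom) : Prop :=
  ∃ Y : Set (Fin F.a → A.Dom),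
    ∀ s : ℕ → A.Dom, (∀ j, F.nvars ≤ j → s j = e j) →
      (∃ w : Fin F.a → A.Dom,
          w ∈ Y ∧ ∀ (i : Fin F.a) (h : i.val < F.p), w i = s (F.zs ⟨i.val, h⟩)) ∧
      ∀ C ∈ F.clauses, ∃ l ∈ C, ELit.Sat A (fun _ => Y) s l

end SOKrom

/-!
Appending a dummy universally quantified relation variable to the prefix changes nothing
semantically, and adds one alternation when the innermost block is existential. Conversely,
an innermost `∀S` can be eliminated from a revised Krom matrix clause by clause: a clause
holds for all `S` iff its part not mentioning `S` holds or `∀S (α(S) ∨ β(S))` holds for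
its (at most two) literals on `S`, and the latter is false, true (`∃z̄ S z̄ ∨ ¬S ȳ`), or
equivalent to `x̄ = ȳ` (`S x̄ ∨ ¬S ȳ`: take `S = {ȳ}`). Each case is again expressed by
revised Krom clauses. For odd `k` a `Σ¹ₖ` prefix, and for even `k` a `Π¹ₖ` prefix, ends
with an existential block, so its `(k+1)`-level counterpart differs by exactly one innermost
universal block.
-/
namespace SOKrom

variable {σ : Vocab}

theorem altCount_append_singleton : ∀ (l : List Bool) (b : Bool),
    altCount (l ++ [b]) = altCount l + if l.getLast? = some !b then 1 else 0
  | [], _ => rfl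
  | [a], b => by cases a <;> cases b <;> rfl
  | a :: c :: l, b => by
    have ih := altCount_append_singleton (c :: l) b
    simp only [List.cons_append, altCount, List.getLast?_cons_cons] at ih ⊢
    omega

theorem getLast?_eq_of_head?_eq : ∀ {l : List Bool} {a : Bool}, l.head? = some a →
    l.getLast? = some (if Even (altCount l) then a else !a)
  | [_], _, h => by simpa [altCount] using h
  | a :: c :: l, b, h => by
    obtain rfl : a = b := by simpa using h
    rw [List.getLast?_cons_cons, getLast?_eq_of_head?_eq (l := c :: l) rfl, altCount]
    cases a <;> cases c <;> simp [Nat.even_add_one, add_comm 1, -Nat.not_even_iff_odd]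

theorem exists_eq_append_replicate_false (l : List Bool) (hlast : l.getLast? = some false)
    (halt : 1 ≤ altCount l) :
    ∃ l' n, l = l' ++ List.replicate n false ∧ l'.head? = l.head? ∧
      altCount l' = altCount l - 1 := by
  induction l using List.reverseRecOn with
  | nil => simp at hlast
  | append_singleton l x ih =>
    obtain rfl : x = false := by simpa using hlast
    have hcount := altCount_append_singleton l false
    obtain _ | ⟨y, hy⟩ : l.getLast? = none ∨ ∃ y, l.getLast? = some y := by
      cases l.getLast? <;> simp
    · simp_all [altCount]
    have hhead : (l ++ [false]).head? = l.head? :=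
      List.head?_append_of_ne_nil _ (by rintro rfl; simp at hy)
    cases y
    · obtain ⟨l', n, rfl, hl', hcount'⟩ := ih hy (by simp_all)
      refine ⟨l', n + 1, by simp [List.replicate_succ'], hl'.trans hhead.symm, ?_⟩
      simp only [hcount, hy] at hcount' ⊢
      simpa using hcount'
    · exact ⟨l, 1, rfl, hhead.symm, by simp_all⟩

section Simulation

variable {m : ℕ} {ar : Fin (m + 1) → ℕ} {ar' : Fin m → ℕ} {qt : Fin (m + 1) → Bool}
  {qt' : Fin m → Bool} {nv nv' : ℕ} {cls : List (Clause σ (m + 1) ar)}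
  {cls' : List (Clause σ m ar')} {A : Struct σ} {e : ℕ → A.Dom}

-- `hmat` absorbs the innermost `∀` into the matrix; `E` matches the remaining quantified
-- relations, whose arities need only agree propositionally.
theorem KromR.satAux_iff_of_forall_last (hqt : ∀ i, qt i.castSucc = qt' i)
    (hlast : qt (Fin.last m) = false)
    (E : ∀ i, Set (Fin (ar i.castSucc) → A.Dom) ≃ Set (Fin (ar' i) → A.Dom))
    (hmat : ∀ V V', (∀ i, V' i = E i (V i.castSucc)) →
      ((∀ S, KromR.Matrix ⟨m + 1, ar, qt, nv, cls⟩ A (Function.update V (Fin.last m) S) e) ↔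
        KromR.Matrix ⟨m, ar', qt', nv', cls'⟩ A V' e))
    {j : ℕ} (hj : j ≤ m) (V : Val (m + 1) ar A.Dom) (V' : Val m ar' A.Dom)
    (hV : ∀ i : Fin m, i.val < j → V' i = E i (V i.castSucc)) :
    KromR.satAux ⟨m + 1, ar, qt, nv, cls⟩ A e V j ↔
      KromR.satAux ⟨m, ar', qt', nv', cls'⟩ A e V' j := by
  unfold KromR.satAux
  dsimp only
  obtain hjm | hjm := hj.lt_or_eq
  · have hq : qt ⟨j, by omega⟩ = qt' ⟨j, hjm⟩ := hqt ⟨j, hjm⟩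
    rw [dif_pos (by omega), dif_pos hjm]
    simp only [hq]
    have ih : ∀ S, KromR.satAux ⟨m + 1, ar, qt, nv, cls⟩ A e
          (Function.update V (Fin.castSucc ⟨j, hjm⟩) S) (j + 1) ↔
        KromR.satAux ⟨m, ar', qt', nv', cls'⟩ A e
          (Function.update V' ⟨j, hjm⟩ (E ⟨j, hjm⟩ S)) (j + 1) := by
      intro S
      refine KromR.satAux_iff_of_forall_last hqt hlast E hmat hjm _ _ fun i hi => ?_
      obtain rfl | hij := eq_or_ne i ⟨j, hjm⟩
      · rw [Function.update_self, Function.update_self]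
      · rw [Function.update_of_ne hij,
          Function.update_of_ne (Fin.castSucc_injective _ |>.ne hij)]
        exact hV i (by have : i.val ≠ j := Fin.val_ne_of_ne hij; omega)
    split
    · exact (E ⟨j, hjm⟩).exists_congr ih
    · exact (E ⟨j, hjm⟩).forall_congr ih
  · subst j
    rw [dif_pos (by omega), dif_neg (lt_irrefl _)]
    simp only [show qt ⟨m, _⟩ = false from hlast, Bool.false_eq_true, if_false]
    refine (forall_congr' fun S => ?_).trans (hmat V V' fun i => hV i i.isLt)
    rw [KromR.satAux, dif_neg (lt_irrefl _)]
    rfl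
termination_by m - j

theorem KromR.sat_iff_of_forall_last (hqt : ∀ i, qt i.castSucc = qt' i)
    (hlast : qt (Fin.last m) = false)
    (E : ∀ i, Set (Fin (ar i.castSucc) → A.Dom) ≃ Set (Fin (ar' i) → A.Dom))
    (hmat : ∀ V V', (∀ i, V' i = E i (V i.castSucc)) →
      ((∀ S, KromR.Matrix ⟨m + 1, ar, qt, nv, cls⟩ A (Function.update V (Fin.last m) S) e) ↔
        KromR.Matrix ⟨m, ar', qt', nv', cls'⟩ A V' e)) :
    KromR.Sat ⟨m + 1, ar, qt, nv, cls⟩ A e ↔ KromR.Sat ⟨m, ar', qt', nv', cls'⟩ A e :=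
  KromR.satAux_iff_of_forall_last hqt hlast E hmat (Nat.zero_le m) _ _
    fun _ hi => absurd hi (Nat.not_lt_zero _)

end Simulation

section Weaken

variable {m : ℕ} {ar : Fin m → ℕ}

def SOLit.weaken : SOLit m ar → SOLit (m + 1) (Fin.snoc ar 0)
  | .pos i a => .pos i.castSucc (a ∘ Fin.cast (Fin.snoc_castSucc ..))
  | .neg i a => .neg i.castSucc (a ∘ Fin.cast (Fin.snoc_castSucc ..))
  | .ex i => .ex i.castSucc
  | .bot => .bot

def Clause.weaken (C : Clause σ m ar) : Clause σ (m + 1) (Fin.snoc ar 0) :=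
  ⟨C.fo, C.h1.weaken, C.h2.weaken⟩

def KromR.snocForall (Φ : KromR σ) : KromR σ :=
  ⟨Φ.m + 1, Fin.snoc Φ.ar 0, Fin.snoc Φ.qt false, Φ.nvars, Φ.clauses.map Clause.weaken⟩

def setFinCongr {a b : ℕ} (D : Type) (h : a = b) : Set (Fin a → D) ≃ Set (Fin b → D) :=
  Equiv.Set.congr ((finCongr h).arrowCongr (Equiv.refl D))

theorem SOLit.sat_weaken_iff (A : Struct σ) (W : Val (m + 1) (Fin.snoc ar 0) A.Dom)
    (s : ℕ → A.Dom) (l : SOLit m ar) :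
    l.weaken.Sat A W s ↔
      l.Sat A (fun i => setFinCongr A.Dom (Fin.snoc_castSucc ..) (W i.castSucc)) s := by
  cases l <;> simp only [SOLit.Sat, weaken, setFinCongr, Equiv.Set.congr_apply,
    Set.mem_image_equiv]
  case pos | neg => rfl
  case ex => exact (Equiv.exists_congr_right _).symm

theorem Clause.sat_weaken_iff (A : Struct σ) (W : Val (m + 1) (Fin.snoc ar 0) A.Dom)
    (s : ℕ → A.Dom) (C : Clause σ m ar) :
    C.weaken.Sat A W s ↔
      C.Sat A (fun i => setFinCongr A.Dom (Fin.snoc_castSucc ..) (W i.castSucc)) s := by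
  simp only [Clause.Sat, weaken, SOLit.sat_weaken_iff]

theorem KromR.prefixList_snocForall (Φ : KromR σ) :
    Φ.snocForall.prefixList = Φ.prefixList ++ [false] := by
  rw [KromR.prefixList, KromR.snocForall, List.ofFn_succ', List.concat_eq_append]
  simp [KromR.prefixList]

theorem KromR.sat_snocForall_iff (Φ : KromR σ) (A : Struct σ) (e : ℕ → A.Dom) :
    Φ.snocForall.Sat A e ↔ Φ.Sat A e := by
  obtain ⟨m, ar, qt, nv, cls⟩ := Φ
  refine KromR.sat_iff_of_forall_last (fun i => Fin.snoc_castSucc ..) (Fin.snoc_last ..)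
    (fun i => setFinCongr A.Dom (Fin.snoc_castSucc ..)) fun V V' hV => ?_
  obtain rfl := funext hV
  simp [KromR.Matrix, Clause.sat_weaken_iff, Fin.castSucc_ne_last]

end Weaken

section ElimLast

inductive LastLit (n : ℕ) : Type
  | pos (args : Fin n → ℕ)
  | neg (args : Fin n → ℕ)
  | ex
  | bot

def LastLit.Sat {n : ℕ} {D : Type} (S : Set (Fin n → D)) (s : ℕ → D) : LastLit n → Prop
  | .pos args => (fun j => s (args j)) ∈ S
  | .neg args => (fun j => s (args j)) ∉ S
  | .ex => ∃ t, t ∈ S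
  | .bot => False

def LastLit.forallCond {n : ℕ} : LastLit n → LastLit n → Option (List (ℕ × ℕ))
  | .pos a, .neg b | .neg b, .pos a => some (List.ofFn fun j => (a j, b j))
  | .ex, .neg _ | .neg _, .ex => some []
  | _, _ => none

theorem forall_mem_or_notMem_iff {α : Type*} (x y : α) :
    (∀ S : Set α, x ∈ S ∨ y ∉ S) ↔ x = y := by
  refine ⟨fun h => (h {y}).resolve_right (not_not.mpr rfl), ?_⟩
  rintro rfl S
  exact em _

theorem LastLit.forall_sat_or_sat_iff {n : ℕ} {D : Type} (l₁ l₂ : LastLit n) (s : ℕ → D) :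
    (∀ S : Set (Fin n → D), l₁.Sat S s ∨ l₂.Sat S s) ↔
      ∃ eqs, forallCond l₁ l₂ = some eqs ∧ ∀ p ∈ eqs, s p.1 = s p.2 := by
  cases l₁ <;> cases l₂ <;> simp only [forallCond, LastLit.Sat, reduceCtorEq,
    Option.some.injEq, false_and, exists_false, exists_eq_left', iff_false, not_forall, not_or,
    not_not, List.not_mem_nil, IsEmpty.forall_iff, implies_true, iff_true, or_false, false_or]
  case pos.neg a b =>
    rw [forall_mem_or_notMem_iff, funext_iff, List.forall_mem_ofFn_iff]
  case neg.pos b a =>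
    rw [forall_congr' fun _ => or_comm, forall_mem_or_notMem_iff, funext_iff,
      List.forall_mem_ofFn_iff]
  case neg.ex b => exact fun S => or_iff_not_imp_left.mpr fun h => ⟨_, not_not.mp h⟩
  case ex.neg b => exact fun S => or_iff_not_imp_right.mpr fun h => ⟨_, not_not.mp h⟩
  all_goals first | (refine ⟨∅, ?_⟩; simp; done) | (refine ⟨Set.univ, ?_⟩; simp)

variable {m : ℕ} {ar : Fin (m + 1) → ℕ}

def SOLit.splitLast :
    SOLit (m + 1) ar → SOLit m (fun i => ar i.castSucc) × LastLit (ar (Fin.last m))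
  | .pos i args => Fin.lastCases (motive := fun i => (Fin (ar i) → ℕ) → _)
      (fun a => (.bot, .pos a)) (fun j a => (.pos j a, .bot)) i args
  | .neg i args => Fin.lastCases (motive := fun i => (Fin (ar i) → ℕ) → _)
      (fun a => (.bot, .neg a)) (fun j a => (.neg j a, .bot)) i args
  | .ex i => Fin.lastCases (motive := fun _ => _) (.bot, .ex) (fun j => (.ex j, .bot)) i
  | .bot => (.bot, .bot)

theorem SOLit.sat_update_last_iff (A : Struct σ) (V : Val (m + 1) ar A.Dom)
    (S : Set (Fin (ar (Fin.last m)) → A.Dom)) (s : ℕ → A.Dom) (l : SOLit (m + 1) ar) :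
    l.Sat A (Function.update V (Fin.last m) S) s ↔
      l.splitLast.1.Sat A (fun i => V i.castSucc) s ∨ l.splitLast.2.Sat S s := by
  cases l with
  | pos i args | neg i args | ex i =>
    induction i using Fin.lastCases <;>
      simp [splitLast, SOLit.Sat, LastLit.Sat, Fin.castSucc_ne_last]
  | bot => simp [splitLast, SOLit.Sat, LastLit.Sat]

def Clause.elimLast (C : Clause σ (m + 1) ar) : List (Clause σ m (fun i => ar i.castSucc)) :=
  match LastLit.forallCond C.h1.splitLast.2 C.h2.splitLast.2 with
  | none => [⟨C.fo, C.h1.splitLast.1, C.h2.splitLast.1⟩]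
  | some eqs => eqs.map fun p => ⟨.eq p.1 p.2 :: C.fo, C.h1.splitLast.1, C.h2.splitLast.1⟩

theorem Clause.forall_sat_update_last_iff (A : Struct σ) (V : Val (m + 1) ar A.Dom)
    (s : ℕ → A.Dom) (C : Clause σ (m + 1) ar) :
    (∀ S, C.Sat A (Function.update V (Fin.last m) S) s) ↔
      ∀ C' ∈ C.elimLast, C'.Sat A (fun i => V i.castSucc) s := by
  set outer : Clause σ m (fun i => ar i.castSucc) := ⟨C.fo, C.h1.splitLast.1, C.h2.splitLast.1⟩
  have key : (∀ S, C.Sat A (Function.update V (Fin.last m) S) s) ↔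
      outer.Sat A (fun i => V i.castSucc) s ∨
        ∃ eqs, LastLit.forallCond C.h1.splitLast.2 C.h2.splitLast.2 = some eqs ∧
          ∀ p ∈ eqs, s p.1 = s p.2 := by
    rw [← LastLit.forall_sat_or_sat_iff, ← forall_or_left]
    refine forall_congr' fun S => ?_
    simp only [outer, Clause.Sat, SOLit.sat_update_last_iff, or_assoc, or_left_comm]
  have hcons : ∀ p : ℕ × ℕ, Clause.Sat A (fun i => V i.castSucc) s
      ⟨.eq p.1 p.2 :: C.fo, C.h1.splitLast.1, C.h2.splitLast.1⟩ ↔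
        s p.1 = s p.2 ∨ outer.Sat A (fun i => V i.castSucc) s := by
    simp [outer, Clause.Sat, FOLit.Sat, or_assoc]
  rw [key, Clause.elimLast]
  split
  · simp [*, outer]
  · simp only [List.forall_mem_map, *, Option.some.injEq, exists_eq_left']
    exact ⟨fun h p hp => h.elim Or.inr fun h => Or.inl (h p hp),
      fun h => or_iff_not_imp_left.mpr fun hP p hp => (h p hp).resolve_right hP⟩

end ElimLast

theorem KromR.exists_sat_iff_of_prefixList_eq_append_false (Φ : KromR σ) {l : List Bool}
    (h : Φ.prefixList = l ++ [false]) :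
    ∃ Ψ : KromR σ, Ψ.prefixList = l ∧
      ∀ (A : Struct σ) (e : ℕ → A.Dom), Φ.Sat A e ↔ Ψ.Sat A e := by
  obtain ⟨_ | m, ar, qt, nv, cls⟩ := Φ
  · simp [KromR.prefixList] at h
  rw [KromR.prefixList, List.ofFn_succ', List.concat_eq_append] at h
  obtain ⟨rfl, hlast⟩ := List.append_inj' h rfl
  refine ⟨⟨m, fun i => ar i.castSucc, fun i => qt i.castSucc, nv,
      cls.flatMap Clause.elimLast⟩, rfl, fun A e => KromR.sat_iff_of_forall_last (fun _ => rfl) (by simpa using hlast)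
      (fun _ => Equiv.refl _) fun V V' hV => ?_⟩
  obtain rfl : V' = fun i : Fin m => V i.castSucc := funext hV
  simp only [KromR.Matrix, List.forall_mem_flatMap, ← Clause.forall_sat_update_last_iff]
  exact ⟨fun h s hs C hC S => h S s hs C hC, fun h S s hs C hC => h s hs C hC S⟩

theorem KromR.exists_sat_iff_of_prefixList_eq_append_replicate (n : ℕ) (Φ : KromR σ)
    {l : List Bool} (h : Φ.prefixList = l ++ List.replicate n false) :
    ∃ Ψ : KromR σ, Ψ.prefixList = l ∧
      ∀ (A : Struct σ) (e : ℕ → A.Dom), Φ.Sat A e ↔ Ψ.Sat A e := by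
  induction n generalizing Φ with
  | zero => exact ⟨Φ, by simpa using h, fun _ _ => Iff.rfl⟩
  | succ n ih =>
    rw [List.replicate_succ', ← List.append_assoc] at h
    obtain ⟨Φ', hΦ', hsat⟩ := Φ.exists_sat_iff_of_prefixList_eq_append_false h
    obtain ⟨Ψ, hΨ, hsat'⟩ := ih Φ' hΦ'
    exact ⟨Ψ, hΨ, fun A e => (hsat A e).trans (hsat' A e)⟩

theorem KromR.exists_sat_iff_altCount_add_one (Φ : KromR σ)
    (hlast : Φ.prefixList.getLast? = some true) :
    ∃ Ψ : KromR σ, Ψ.prefixList.head? = Φ.prefixList.head? ∧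
      altCount Ψ.prefixList = altCount Φ.prefixList + 1 ∧
      ∀ (A : Struct σ) (e : ℕ → A.Dom), Φ.Sat A e ↔ Ψ.Sat A e := by
  refine ⟨Φ.snocForall, ?_, ?_, fun A e => (Φ.sat_snocForall_iff A e).symm⟩
  · rw [prefixList_snocForall, List.head?_append_of_ne_nil]
    rintro h
    simp [h] at hlast
  · rw [prefixList_snocForall, altCount_append_singleton, Bool.not_false, if_pos hlast]

theorem KromR.exists_sat_iff_altCount_sub_one (Φ : KromR σ)
    (hlast : Φ.prefixList.getLast? = some false) (halt : 1 ≤ altCount Φ.prefixList) :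
    ∃ Ψ : KromR σ, Ψ.prefixList.head? = Φ.prefixList.head? ∧
      altCount Ψ.prefixList = altCount Φ.prefixList - 1 ∧
      ∀ (A : Struct σ) (e : ℕ → A.Dom), Φ.Sat A e ↔ Ψ.Sat A e := by
  obtain ⟨l, n, hl, hhead, halt'⟩ := exists_eq_append_replicate_false _ hlast halt
  obtain ⟨Ψ, rfl, hsat⟩ := Φ.exists_sat_iff_of_prefixList_eq_append_replicate n hl
  exact ⟨Ψ, hhead, halt', hsat⟩

/-- For `k ≥ 1`: if `k` is odd then `Σ¹ₖ`-KROM^r and `Σ¹ₖ₊₁`-KROM^r have the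
same expressive power on all finite structures, and if `k` is even then
`Π¹ₖ`-KROM^r and `Π¹ₖ₊₁`-KROM^r have the same expressive power on all finite
structures. -/
theorem kromr_innermost_universal_collapse (σ : Vocab) (k : ℕ) (hk : 1 ≤ k) :
    (Odd k →
      (∀ Φ : KromR σ, Φ.IsSigma k → ∃ Ψ : KromR σ, Ψ.IsSigma (k + 1) ∧
        ∀ (A : Struct σ) [Fintype A.Dom] [Nonempty A.Dom] (e : ℕ → A.Dom),
          Φ.Sat A e ↔ Ψ.Sat A e) ∧
      (∀ Ψ : KromR σ, Ψ.IsSigma (k + 1) → ∃ Φ : KromR σ, Φ.IsSigma k ∧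
        ∀ (A : Struct σ) [Fintype A.Dom] [Nonempty A.Dom] (e : ℕ → A.Dom),
          Ψ.Sat A e ↔ Φ.Sat A e)) ∧
    (Even k →
      (∀ Φ : KromR σ, Φ.IsPi k → ∃ Ψ : KromR σ, Ψ.IsPi (k + 1) ∧
        ∀ (A : Struct σ) [Fintype A.Dom] [Nonempty A.Dom] (e : ℕ → A.Dom),
          Φ.Sat A e ↔ Ψ.Sat A e) ∧
      (∀ Ψ : KromR σ, Ψ.IsPi (k + 1) → ∃ Φ : KromR σ, Φ.IsPi k ∧
        ∀ (A : Struct σ) [Fintype A.Dom] [Nonempty A.Dom] (e : ℕ → A.Dom),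
          Ψ.Sat A e ↔ Φ.Sat A e)) := by
  refine ⟨fun hodd => ⟨?_, ?_⟩, fun heven => ⟨?_, ?_⟩⟩
  · rintro Φ ⟨hhead, halt⟩
    obtain ⟨Ψ, hhead', halt', hsat⟩ := Φ.exists_sat_iff_altCount_add_one (by
      rw [getLast?_eq_of_head?_eq hhead, halt, if_pos (Nat.Odd.sub_odd hodd odd_one)])
    exact ⟨Ψ, ⟨hhead'.trans hhead, by omega⟩, fun A _ _ e => hsat A e⟩
  · rintro Ψ ⟨hhead, halt⟩
    obtain ⟨Φ, hhead', halt', hsat⟩ := Ψ.exists_sat_iff_altCount_sub_one (by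
      rw [getLast?_eq_of_head?_eq hhead, halt, Nat.add_sub_cancel,
        if_neg (Nat.not_even_iff_odd.mpr hodd), Bool.not_true]) (by omega)
    exact ⟨Φ, ⟨hhead'.trans hhead, by omega⟩, fun A _ _ e => hsat A e⟩
  · rintro Φ ⟨hhead, halt⟩
    obtain ⟨Ψ, hhead', halt', hsat⟩ := Φ.exists_sat_iff_altCount_add_one (by
      rw [getLast?_eq_of_head?_eq hhead, halt,
        if_neg (Nat.not_even_iff_odd.mpr (Nat.Even.sub_odd hk heven odd_one)), Bool.not_false])
    exact ⟨Ψ, ⟨hhead'.trans hhead, by omega⟩, fun A _ _ e => hsat A e⟩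
  · rintro Ψ ⟨hhead, halt⟩
    obtain ⟨Φ, hhead', halt', hsat⟩ := Ψ.exists_sat_iff_altCount_sub_one (by
      rw [getLast?_eq_of_head?_eq hhead, halt, Nat.add_sub_cancel, if_pos heven]) (by omega)
    exact ⟨Φ, ⟨hhead'.trans hhead, by omega⟩, fun A _ _ e => hsat A e⟩

end SOKrom
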